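/- For all indices i, j, k one has C_i^{jk}(p) = −((m−2)/(2K))·[ a_i^{jk} − (δ_i^j a^k + δ_i^k a^j) + a_i·(2a^j a^k − a^{jk}) ], where δ denotes the Kronecker delta. -/

import Mathlib

open Finset

noncomputable section

/-- `A(p) = ∑ a^{i₁…i_m} p_{i₁}⋯p_{i_m}`, where `m = M + 3 ≥ 3`. -/
def Afun {n M : ℕ} (a : (Fin (M + 3) → Fin n) → ℝ) (p : Fin n → ℝ) : ℝ :=
  ∑ ι : Fin (M + 3) → Fin n, a ι * ∏ t, p (ι t)

/-- `K(p) = A(p)^{1/m}`. -/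
def Kfun {n M : ℕ} (a : (Fin (M + 3) → Fin n) → ℝ) (p : Fin n → ℝ) : ℝ :=
  Afun a p ^ ((1 : ℝ) / (M + 3))

/-- `a^i = (∑ a^{i i₂…i_m} p_{i₂}⋯p_{i_m}) / K^{m-1}`. -/
def aU1 {n M : ℕ} (a : (Fin (M + 3) → Fin n) → ℝ) (i : Fin n) (p : Fin n → ℝ) : ℝ :=
  (∑ ι : Fin (M + 2) → Fin n, a (Fin.cons i ι) * ∏ t, p (ι t)) / Kfun a p ^ (M + 2)

/-- `a^{ij} = (∑ a^{i j i₃…i_m} p_{i₃}⋯p_{i_m}) / K^{m-2}`. -/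
def aU2 {n M : ℕ} (a : (Fin (M + 3) → Fin n) → ℝ) (i j : Fin n) (p : Fin n → ℝ) : ℝ :=
  (∑ ι : Fin (M + 1) → Fin n, a (Fin.cons i (Fin.cons j ι)) * ∏ t, p (ι t)) / Kfun a p ^ (M + 1)

/-- `a^{ijk} = (∑ a^{i j k i₄…i_m} p_{i₄}⋯p_{i_m}) / K^{m-3}`. -/
def aU3 {n M : ℕ} (a : (Fin (M + 3) → Fin n) → ℝ) (i j k : Fin n) (p : Fin n → ℝ) : ℝ :=
  (∑ ι : Fin M → Fin n, a (Fin.cons i (Fin.cons j (Fin.cons k ι))) * ∏ t, p (ι t)) / Kfun a p ^ M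

/-- Partial derivative `∂f/∂p_k` of a function of `p`. -/
def pd {n : ℕ} (f : (Fin n → ℝ) → ℝ) (k : Fin n) (p : Fin n → ℝ) : ℝ :=
  deriv (fun t => f (Function.update p k t)) (p k)

/-- Fundamental metrical d-tensor `g^{ij} = (1/2) ∂²(K²)/∂p_i∂p_j`. -/
def gU {n M : ℕ} (a : (Fin (M + 3) → Fin n) → ℝ) (i j : Fin n) (p : Fin n → ℝ) : ℝ :=
  (1 / 2 : ℝ) * pd (fun q => pd (fun r => Kfun a r ^ 2) j q) i p

/-- Angular metrical d-tensor `h^{ij} = K ∂²K/∂p_i∂p_j`. -/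
def hU {n M : ℕ} (a : (Fin (M + 3) → Fin n) → ℝ) (i j : Fin n) (p : Fin n → ℝ) : ℝ :=
  Kfun a p * pd (fun q => pd (Kfun a) j q) i p

/-- v-torsion d-tensor `C^{ijk} = -(1/2) ∂g^{ij}/∂p_k`. -/
def CU {n M : ℕ} (a : (Fin (M + 3) → Fin n) → ℝ) (i j k : Fin n) (p : Fin n → ℝ) : ℝ :=
  -(1 / 2 : ℝ) * pd (gU a i j) k p

/-- Symmetry of `a` in all of its `m` indices. -/
def aSym {n M : ℕ} (a : (Fin (M + 3) → Fin n) → ℝ) : Prop :=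
  ∀ (σ : Equiv.Perm (Fin (M + 3))) (ι : Fin (M + 3) → Fin n), a (ι ∘ σ) = a ι

/-- `a_i = ∑_s a_{is} a^s`, where `aLow` is the inverse matrix of `(a^{ij})`. -/
def aL {n M : ℕ} (a : (Fin (M + 3) → Fin n) → ℝ) (aLow : Matrix (Fin n) (Fin n) ℝ)
    (p : Fin n → ℝ) (i : Fin n) : ℝ :=
  ∑ s, aLow i s * aU1 a s p

/-- `a_i^{jk} = ∑_s a_{is} a^{sjk}`. -/
def aL3 {n M : ℕ} (a : (Fin (M + 3) → Fin n) → ℝ) (aLow : Matrix (Fin n) (Fin n) ℝ)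
    (p : Fin n → ℝ) (i j k : Fin n) : ℝ :=
  ∑ s, aLow i s * aU3 a s j k p

/-- `g_{ij} = (1/(m-1)) a_{ij} + ((m-2)/(m-1)) a_i a_j`, the inverse of `g^{ij}`. -/
def gL {n M : ℕ} (a : (Fin (M + 3) → Fin n) → ℝ) (aLow : Matrix (Fin n) (Fin n) ℝ)
    (p : Fin n → ℝ) (i j : Fin n) : ℝ :=
  (1 / (M + 2 : ℝ)) * aLow i j + ((M + 1 : ℝ) / (M + 2)) * aL a aLow p i * aL a aLow p j

/-- v-derivation components `C_i^{jk} = ∑_s g_{is} C^{sjk}`. -/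
def CL {n M : ℕ} (a : (Fin (M + 3) → Fin n) → ℝ) (aLow : Matrix (Fin n) (Fin n) ℝ)
    (p : Fin n → ℝ) (i j k : Fin n) : ℝ :=
  ∑ s, gL a aLow p i s * CU a s j k p

/-- v-curvature d-tensor `S^{hijk} = ∑_r (C_r^{ij} C^{rhk} - C_r^{ik} C^{rhj})`. -/
def Scurv {n M : ℕ} (a : (Fin (M + 3) → Fin n) → ℝ) (aLow : Matrix (Fin n) (Fin n) ℝ)
    (p : Fin n → ℝ) (h i j k : Fin n) : ℝ :=
  ∑ r, (CL a aLow p r i j * CU a r h k p - CL a aLow p r i k * CU a r h j p)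

/-- `U^{hijk} = ∑_r (a_r^{ij} a^{rhk} - a_r^{ik} a^{rhj})`. -/
def Ufun {n M : ℕ} (a : (Fin (M + 3) → Fin n) → ℝ) (aLow : Matrix (Fin n) (Fin n) ℝ)
    (p : Fin n → ℝ) (h i j k : Fin n) : ℝ :=
  ∑ r, (aL3 a aLow p r i j * aU3 a r h k p - aL3 a aLow p r i k * aU3 a r h j p)

/-! Write `⟨c, p^r⟩ = ∑ c ι ∏ p (ι t)` (`homogEval`) for a symmetric tensor `c` of order `r`.
The numerators of `a^i, a^{ij}, a^{ijk}` are `⟨c, p^r⟩` for the first slices `a(i, ⋯)`,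
`a(i, j, ⋯)`, `a(i, j, k, ⋯)`. Everything follows from Euler's identity
`⟨c, p^{r+1}⟩ = ∑ₓ pₓ ⟨c(x, ⋯), p^r⟩` and from `∂ₖ ⟨c, p^{r+1}⟩ = (r + 1) ⟨c(k, ⋯), p^r⟩`, which
follows from it by induction on `r`, using the symmetry of `c`. They give `∂ₖ K = a^k`,
`g^{ij} = (m-1) a^{ij} - (m-2) a^i a^j` and an explicit formula for `C^{ijk}`. Euler's identity
also yields `a_i = p_i / K` and `p_s C^{sjk} = 0`, so only the `a_{ij}`-part of `g_{ij}`
contributes to `C_i^{jk}`, and contracting with it gives the formula. -/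

open Function
open scoped Matrix

section SymmetricTensor

variable {n r : ℕ}

def homogEval (c : (Fin r → Fin n) → ℝ) (p : Fin n → ℝ) : ℝ :=
  ∑ ι : Fin r → Fin n, c ι * ∏ t, p (ι t)

def firstSlice (c : (Fin (r + 1) → Fin n) → ℝ) (x : Fin n) : (Fin r → Fin n) → ℝ :=
  fun ι => c (Fin.cons x ι)

def IsSymmTensor (c : (Fin r → Fin n) → ℝ) : Prop :=
  ∀ (σ : Equiv.Perm (Fin r)) (ι : Fin r → Fin n), c (ι ∘ σ) = c ι

theorem isSymmTensor_firstSlice {c : (Fin (r + 1) → Fin n) → ℝ} (hc : IsSymmTensor c)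
    (x : Fin n) : IsSymmTensor (firstSlice c x) := fun σ ι => by
  have : (Fin.cons x ι : Fin (r + 1) → Fin n) ∘ Equiv.Perm.decomposeFin.symm (0, σ) =
      Fin.cons x (ι ∘ σ) := by
    ext t
    refine Fin.cases ?_ (fun t => ?_) t <;> simp
  rw [firstSlice, firstSlice, ← this, hc]

theorem IsSymmTensor.firstSlice_comm {c : (Fin (r + 2) → Fin n) → ℝ} (hc : IsSymmTensor c)
    (x y : Fin n) : firstSlice (firstSlice c x) y = firstSlice (firstSlice c y) x := by
  ext ι
  have : (Fin.cons y (Fin.cons x ι) : Fin (r + 2) → Fin n) ∘ Equiv.swap 0 1 =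
      Fin.cons x (Fin.cons y ι) := by
    ext t
    refine Fin.cases ?_ (fun t => Fin.cases ?_ (fun t => ?_) t) t
    · simp [Equiv.swap_apply_left, Fin.cons_one]
    · simp [Equiv.swap_apply_right]
    · rw [comp_apply, Equiv.swap_apply_of_ne_of_ne (Fin.succ_ne_zero _)
        (by simp [Fin.ext_iff])]
      simp
  simp only [firstSlice]
  rw [← this, hc]

theorem homogEval_eq_sum_mul_firstSlice (c : (Fin (r + 1) → Fin n) → ℝ) (p : Fin n → ℝ) :
    homogEval c p = ∑ x, p x * homogEval (firstSlice c x) p := by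
  rw [homogEval, ← (Fin.consEquiv fun _ => Fin n).sum_comp, Fintype.sum_prod_type]
  simp only [homogEval, firstSlice, mul_sum, Fin.consEquiv, Equiv.coe_fn_mk, Fin.prod_univ_succ,
    Fin.cons_zero, Fin.cons_succ]
  exact sum_congr rfl fun x _ => sum_congr rfl fun ι _ => by ring

theorem hasDerivAt_homogEval_of_firstSlice {c : (Fin (r + 1) → Fin n) → ℝ} {p : Fin n → ℝ}
    {k : Fin n} {D : Fin n → ℝ}
    (hD : ∀ x, HasDerivAt (fun t => homogEval (firstSlice c x) (update p k t)) (D x) (p k)) :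
    HasDerivAt (fun t => homogEval c (update p k t))
      (homogEval (firstSlice c k) p + ∑ x, p x * D x) (p k) := by
  simp_rw [homogEval_eq_sum_mul_firstSlice c]
  have hsum := HasDerivAt.fun_sum (u := univ) fun x _ =>
    ((hasDerivAt_pi.mp (hasDerivAt_update p k (p k))) x).fun_mul (hD x)
  simp only [update_eq_self] at hsum
  refine hsum.congr_deriv ?_
  simp [Pi.single_apply, sum_add_distrib]

theorem hasDerivAt_homogEval {c : (Fin (r + 1) → Fin n) → ℝ} (hc : IsSymmTensor c)
    (p : Fin n → ℝ) (k : Fin n) :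
    HasDerivAt (fun t => homogEval c (update p k t))
      ((r + 1) * homogEval (firstSlice c k) p) (p k) := by
  induction r with
  | zero =>
    have hconst (x : Fin n) :
        HasDerivAt (fun t => homogEval (firstSlice c x) (update p k t)) 0 (p k) := by
      simp only [homogEval, Fin.prod_univ_zero]
      exact hasDerivAt_const _ _
    convert hasDerivAt_homogEval_of_firstSlice hconst using 1
    simp
  | succ r ih =>
    convert hasDerivAt_homogEval_of_firstSlice fun x => ih (isSymmTensor_firstSlice hc x) using 1
    simp_rw [hc.firstSlice_comm _ k, mul_left_comm (p _), ← mul_sum,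
      ← homogEval_eq_sum_mul_firstSlice]
    push_cast
    ring

end SymmetricTensor

section CartanMetric

variable {n M : ℕ} {a : (Fin (M + 3) → Fin n) → ℝ} {q : Fin n → ℝ}

theorem aU1_eq (i : Fin n) (q : Fin n → ℝ) :
    aU1 a i q = homogEval (firstSlice a i) q / Kfun a q ^ (M + 2) := rfl

theorem aU2_eq (i j : Fin n) (q : Fin n → ℝ) :
    aU2 a i j q = homogEval (firstSlice (firstSlice a i) j) q / Kfun a q ^ (M + 1) := rfl

theorem aU3_eq (i j k : Fin n) (q : Fin n → ℝ) :
    aU3 a i j k q =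
      homogEval (firstSlice (firstSlice (firstSlice a i) j) k) q / Kfun a q ^ M := rfl

theorem Kfun_pos (hq : 0 < Afun a q) : 0 < Kfun a q :=
  Real.rpow_pos_of_pos hq _

theorem Kfun_pow_eq_Afun (hq : 0 < Afun a q) : Kfun a q ^ (M + 3) = Afun a q := by
  rw [Kfun, ← Real.rpow_natCast, ← Real.rpow_mul hq.le]
  push_cast
  rw [one_div_mul_cancel (by positivity), Real.rpow_one]

theorem hasDerivAt_Afun (hsym : aSym a) (q : Fin n → ℝ) (k : Fin n) :
    HasDerivAt (fun t => Afun a (update q k t))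
      ((M + 3) * homogEval (firstSlice a k) q) (q k) :=
  (hasDerivAt_homogEval hsym q k).congr_deriv (by push_cast; ring)

theorem hasDerivAt_Kfun (hsym : aSym a) (hq : 0 < Afun a q) (k : Fin n) :
    HasDerivAt (fun t => Kfun a (update q k t)) (aU1 a k q) (q k) := by
  have hA := (hasDerivAt_Afun hsym q k).rpow_const (p := 1 / (M + 3 : ℝ))
    (Or.inl (by rw [update_eq_self]; exact hq.ne'))
  simp only [update_eq_self] at hA
  refine hA.congr_deriv ?_
  have hK := Kfun_pos hq
  rw [Real.rpow_sub hq, Real.rpow_one, ← Kfun, ← Kfun_pow_eq_Afun hq, aU1_eq]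
  field_simp
  ring

theorem hasDerivAt_homogEval_div_Kfun_pow (hsym : aSym a) (hq : 0 < Afun a q) {r : ℕ}
    {c : (Fin (r + 1) → Fin n) → ℝ} (hc : IsSymmTensor c) (k : Fin n) :
    HasDerivAt (fun t => homogEval c (update q k t) / Kfun a (update q k t) ^ (r + 1))
      ((r + 1) * (homogEval (firstSlice c k) q / Kfun a q ^ r -
        homogEval c q / Kfun a q ^ (r + 1) * aU1 a k q) / Kfun a q) (q k) := by
  have hK := Kfun_pos hq
  have hd := (hasDerivAt_homogEval hc q k).fun_div
    ((hasDerivAt_Kfun hsym hq k).fun_pow (r + 1)) (by rw [update_eq_self]; positivity)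
  simp only [update_eq_self] at hd
  refine hd.congr_deriv ?_
  field_simp
  push_cast
  ring

theorem hasDerivAt_aU1 (hsym : aSym a) (hq : 0 < Afun a q) (i k : Fin n) :
    HasDerivAt (fun t => aU1 a i (update q k t))
      ((M + 2) * (aU2 a i k q - aU1 a i q * aU1 a k q) / Kfun a q) (q k) := by
  refine (hasDerivAt_homogEval_div_Kfun_pow (r := M + 1) hsym hq
    (isSymmTensor_firstSlice hsym i) k).congr_deriv ?_
  simp only [aU1_eq, aU2_eq]
  push_cast
  ring

theorem hasDerivAt_aU2 (hsym : aSym a) (hq : 0 < Afun a q) (i j k : Fin n) :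
    HasDerivAt (fun t => aU2 a i j (update q k t))
      ((M + 1) * (aU3 a i j k q - aU2 a i j q * aU1 a k q) / Kfun a q) (q k) :=
  (hasDerivAt_homogEval_div_Kfun_pow (r := M) hsym hq
    (isSymmTensor_firstSlice (isSymmTensor_firstSlice hsym i) j) k).congr_deriv (by
      rw [aU2_eq, aU3_eq])

theorem aU2_comm (hsym : aSym a) (i j : Fin n) (q : Fin n → ℝ) : aU2 a i j q = aU2 a j i q := by
  rw [aU2_eq, aU2_eq, IsSymmTensor.firstSlice_comm hsym]

theorem aU3_comm₁₂ (hsym : aSym a) (i j k : Fin n) (q : Fin n → ℝ) :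
    aU3 a i j k q = aU3 a j i k q := by
  rw [aU3_eq, aU3_eq, IsSymmTensor.firstSlice_comm hsym]

theorem aU3_comm₂₃ (hsym : aSym a) (i j k : Fin n) (q : Fin n → ℝ) :
    aU3 a i j k q = aU3 a i k j q := by
  rw [aU3_eq, aU3_eq, (isSymmTensor_firstSlice hsym i).firstSlice_comm]

theorem eventually_Afun_update_pos (hsym : aSym a) (hq : 0 < Afun a q) (k : Fin n) :
    ∀ᶠ t in nhds (q k), 0 < Afun a (update q k t) :=
  continuousAt_const.eventually_lt (hasDerivAt_Afun hsym q k).continuousAt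
    (by rwa [update_eq_self])

theorem pd_Kfun_sq (hsym : aSym a) (hq : 0 < Afun a q) (j : Fin n) :
    pd (fun r => Kfun a r ^ 2) j q = 2 * Kfun a q * aU1 a j q := by
  have hd := (hasDerivAt_Kfun hsym hq j).fun_pow 2
  simp only [update_eq_self] at hd
  rw [pd, hd.deriv]
  ring

theorem gU_eq (hsym : aSym a) (hq : 0 < Afun a q) (i j : Fin n) :
    gU a i j q = (M + 2) * aU2 a i j q - (M + 1) * (aU1 a i q * aU1 a j q) := by
  have hpd : (fun t => pd (fun r => Kfun a r ^ 2) j (update q i t)) =ᶠ[nhds (q i)]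
      fun t => 2 * Kfun a (update q i t) * aU1 a j (update q i t) := by
    filter_upwards [eventually_Afun_update_pos hsym hq i] with t ht
    exact pd_Kfun_sq hsym ht j
  have hd := ((hasDerivAt_Kfun hsym hq i).const_mul 2).fun_mul (hasDerivAt_aU1 hsym hq j i)
  simp only [update_eq_self] at hd
  have hK := (Kfun_pos hq).ne'
  rw [gU, pd, hpd.deriv_eq, hd.deriv, aU2_comm hsym i j]
  field_simp
  ring

theorem CU_eq (hsym : aSym a) (hq : 0 < Afun a q) (i j k : Fin n) :
    CU a i j k q = -((M + 2) * (M + 1) / (2 * Kfun a q)) *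
      (aU3 a i j k q - aU2 a i j q * aU1 a k q - aU2 a i k q * aU1 a j q -
        aU1 a i q * aU2 a j k q + 2 * (aU1 a i q * aU1 a j q * aU1 a k q)) := by
  have hg : (fun t => gU a i j (update q k t)) =ᶠ[nhds (q k)]
      fun t => (M + 2) * aU2 a i j (update q k t) -
        (M + 1) * (aU1 a i (update q k t) * aU1 a j (update q k t)) := by
    filter_upwards [eventually_Afun_update_pos hsym hq k] with t ht
    exact gU_eq hsym ht i j
  have hd := ((hasDerivAt_aU2 hsym hq i j k).const_mul (M + 2 : ℝ)).fun_sub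
    (((hasDerivAt_aU1 hsym hq i k).fun_mul (hasDerivAt_aU1 hsym hq j k)).const_mul (M + 1 : ℝ))
  simp only [update_eq_self] at hd
  have hK := (Kfun_pos hq).ne'
  rw [CU, pd, hg.deriv_eq, hd.deriv]
  field_simp
  ring

theorem sum_mul_aU1 (hq : 0 < Afun a q) : ∑ x, q x * aU1 a x q = Kfun a q := by
  have hK := (Kfun_pos hq).ne'
  simp_rw [aU1_eq, mul_div_assoc', ← sum_div, ← homogEval_eq_sum_mul_firstSlice]
  rw [show homogEval a q = Afun a q from rfl, ← Kfun_pow_eq_Afun hq]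
  field_simp
  ring

theorem sum_mul_aU2 (hq : 0 < Afun a q) (i : Fin n) :
    ∑ x, q x * aU2 a i x q = Kfun a q * aU1 a i q := by
  have hK := (Kfun_pos hq).ne'
  simp_rw [aU2_eq, mul_div_assoc', ← sum_div, ← homogEval_eq_sum_mul_firstSlice, aU1_eq]
  field_simp
  ring

theorem sum_mul_aU3 (hq : 0 < Afun a q) (i j : Fin n) :
    ∑ x, q x * aU3 a i j x q = Kfun a q * aU2 a i j q := by
  have hK := (Kfun_pos hq).ne'
  simp_rw [aU3_eq, mul_div_assoc', ← sum_div, ← homogEval_eq_sum_mul_firstSlice, aU2_eq]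
  field_simp
  ring

theorem sum_mul_CU (hsym : aSym a) (hq : 0 < Afun a q) (w : Fin n → ℝ) (j k : Fin n) :
    ∑ s, w s * CU a s j k q = -((M + 2) * (M + 1) / (2 * Kfun a q)) *
      (∑ s, w s * aU3 a s j k q - aU1 a k q * ∑ s, w s * aU2 a s j q -
        aU1 a j q * ∑ s, w s * aU2 a s k q +
        (2 * (aU1 a j q * aU1 a k q) - aU2 a j k q) * ∑ s, w s * aU1 a s q) := by
  simp only [CU_eq hsym hq, mul_sum, ← sum_sub_distrib, ← sum_add_distrib]
  exact sum_congr rfl fun s _ => by ring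

theorem sum_mul_CU_self (hsym : aSym a) (hq : 0 < Afun a q) (j k : Fin n) :
    ∑ s, q s * CU a s j k q = 0 := by
  have hjk : ∑ s, q s * aU3 a s j k q = Kfun a q * aU2 a j k q := by
    simp_rw [aU3_comm₁₂ hsym _ j, aU3_comm₂₃ hsym j, sum_mul_aU3 hq]
  have hj : ∀ x, ∑ s, q s * aU2 a s x q = Kfun a q * aU1 a x q := fun x => by
    simp_rw [aU2_comm hsym _ x, sum_mul_aU2 hq]
  rw [sum_mul_CU hsym hq, hjk, hj, hj, sum_mul_aU1 hq]
  ring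

variable {aLow : Matrix (Fin n) (Fin n) ℝ}

theorem aL_eq (hq : 0 < Afun a q) (hinv : aLow * (Matrix.of fun i j => aU2 a i j q) = 1)
    (i : Fin n) : aL a aLow q i = q i / Kfun a q := by
  have hK := (Kfun_pos hq).ne'
  have heuler : (Matrix.of fun i j => aU2 a i j q) *ᵥ q = Kfun a q • fun i => aU1 a i q := by
    ext i
    simp [Matrix.mulVec, dotProduct, mul_comm (aU2 a _ _ q), sum_mul_aU2 hq]
  have h := congrFun (congrArg (aLow *ᵥ ·) heuler) i
  simp only [Matrix.mulVec_mulVec, hinv, Matrix.one_mulVec, Matrix.mulVec_smul] at h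
  rw [eq_div_iff hK, aL, h]
  simp [Matrix.mulVec, dotProduct, mul_comm]

theorem sum_aL_mul_CU (hsym : aSym a) (hq : 0 < Afun a q)
    (hinv : aLow * (Matrix.of fun i j => aU2 a i j q) = 1) (j k : Fin n) :
    ∑ s, aL a aLow q s * CU a s j k q = 0 := by
  simp_rw [aL_eq hq hinv, div_mul_eq_mul_div, ← sum_div, sum_mul_CU_self hsym hq, zero_div]

end CartanMetric

theorem stmt_6_general {n M : ℕ} (a : (Fin (M + 3) → Fin n) → ℝ)
    (hsym : aSym a) (p : Fin n → ℝ) (hA : 0 < Afun a p)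
    (aLow : Matrix (Fin n) (Fin n) ℝ)
    (hInv₂ : aLow * (Matrix.of fun i j => aU2 a i j p) = 1) :
    ∀ i j k : Fin n,
      CL a aLow p i j k = -((M + 1 : ℝ) / (2 * Kfun a p)) *
        (aL3 a aLow p i j k -
          ((if i = j then (1 : ℝ) else 0) * aU1 a k p +
            (if i = k then (1 : ℝ) else 0) * aU1 a j p) +
          aL a aLow p i * (2 * (aU1 a j p * aU1 a k p) - aU2 a j k p)) := by
  intro i j k
  have hδ : ∀ x y, ∑ s, aLow x s * aU2 a s y p = if x = y then 1 else 0 := fun x y => by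
    simpa [Matrix.mul_apply, Matrix.one_apply] using congrFun (congrFun hInv₂ x) y
  have hCL : CL a aLow p i j k = 1 / (M + 2) * ∑ s, aLow i s * CU a s j k p := by
    simp only [CL, gL, add_mul, sum_add_distrib, mul_assoc, ← mul_sum,
      sum_aL_mul_CU hsym hA hInv₂, mul_zero, add_zero]
  have hK := (Kfun_pos hA).ne'
  rw [hCL, sum_mul_CU hsym hA, hδ, hδ]
  simp only [aL3, aL]
  field_simp
  ring

/-- `C_i^{jk} = -((m-2)/(2K)) [a_i^{jk} - (δ_i^j a^k + δ_i^k a^j)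
+ a_i (2 a^j a^k - a^{jk})]`, where `m = M + 3`. -/
theorem stmt_6 {n M : ℕ} (hn : 4 ≤ n) (a : (Fin (M + 3) → Fin n) → ℝ)
    (hsym : aSym a) (p : Fin n → ℝ) (hA : 0 < Afun a p)
    (aLow : Matrix (Fin n) (Fin n) ℝ)
    (hInv₁ : (Matrix.of fun i j => aU2 a i j p) * aLow = 1)
    (hInv₂ : aLow * (Matrix.of fun i j => aU2 a i j p) = 1) :
    ∀ i j k : Fin n,
      CL a aLow p i j k = -((M + 1 : ℝ) / (2 * Kfun a p)) *
        (aL3 a aLow p i j k -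
          ((if i = j then (1 : ℝ) else 0) * aU1 a k p +
            (if i = k then (1 : ℝ) else 0) * aU1 a j p) +
          aL a aLow p i * (2 * (aU1 a j p * aU1 a k p) - aU2 a j k p)) :=
  stmt_6_general a hsym p hA aLow hInv₂
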